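/- Any deterministic mechanism f for the two-facility game on the line (n ≥ 6 agents, n even) satisfying the property that for every profile x, either the two output facilities coincide or some output facility l satisfies l ≤ min x or l ≥ max x, has approximation ratio at least n/4 for social cost. Concretely, on the profile with one agent at 0, one at 1, n/2 − 1 agents at ε, and n/2 − 1 agents at 1 − ε (ε ∈ (0, 1/4)), the social cost of f is at least (n/2 − 1)·ε while OPT equals 2ε. -/

import Mathlib

noncomputable def cost2 (p : ℝ × ℝ) (y : ℝ) : ℝ := min |p.1 - y| |p.2 - y|

noncomputable def SC {n : ℕ} (p : ℝ × ℝ) (x : Fin n → ℝ) : ℝ := ∑ i, cost2 p (x i)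

noncomputable def OPT {n : ℕ} (x : Fin n → ℝ) : ℝ :=
  sInf {c | ∃ l1 l2 : ℝ, c = SC (l1, l2) x}

/-- One agent at `0`, one at `1`, `n/2 - 1` agents at `ε`, `n/2 - 1` agents at `1 - ε`. -/
noncomputable def hardProfile (n : ℕ) (ε : ℝ) : Fin n → ℝ := fun i =>
  if (i : ℕ) = 0 then 0 else if (i : ℕ) = n - 1 then 1
  else if (i : ℕ) < n / 2 then ε else 1 - ε

/-! Write `n = 2 (k + 1)`; on the hard profile a pair of facilities with per-agent cost `c` pays
`c 0 + c 1 + k (c ε + c (1 - ε))`. A facility left of `1/2` is `ε`-far from `1 - ε` and `1`, one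
right of `1/2` is `ε`-far from `0` and `ε`, and two points `ε` apart that are `ε`-far from one
facility pay at least `ε` together (triangle inequality for the truncated metric). Hence every
pair pays at least `2ε` on the four locations, and `(ε, 1 - ε)` pays exactly `2ε`. A mechanism
with coinciding facilities pays `1 - 2ε ≥ 2ε` on each couple `ε, 1 - ε`; one with a facility
outside `(0, 1)` pays `ε` on each such couple and `2ε` on the couple together with the endpoint
it is far from. Either way it pays `(k + 1) ε = n ε / 2`.
-/

lemma cost2_nonneg (p : ℝ × ℝ) (y : ℝ) : 0 ≤ cost2 p y :=
  le_min (abs_nonneg _) (abs_nonneg _)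

lemma cost2_swap (p : ℝ × ℝ) (y : ℝ) : cost2 p.swap y = cost2 p y :=
  min_comm _ _

lemma SC_swap {n : ℕ} (p : ℝ × ℝ) (x : Fin n → ℝ) : SC p.swap x = SC p x := by
  simp only [SC, cost2_swap]

lemma cost2_of_fst_eq_snd {p : ℝ × ℝ} (hp : p.1 = p.2) (y : ℝ) : cost2 p y = |p.1 - y| := by
  rw [cost2, ← hp, min_self]

lemma le_abs_sub_of_add_le {ε u y : ℝ} (h : u + ε ≤ y) : ε ≤ |u - y| :=
  le_abs'.2 (.inl (by linarith))

lemma le_abs_sub_of_add_le' {ε u y : ℝ} (h : y + ε ≤ u) : ε ≤ |u - y| :=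
  le_abs'.2 (.inr (by linarith))

lemma le_cost2 {ε y : ℝ} {p : ℝ × ℝ} (h₁ : ε ≤ |p.1 - y|) (h₂ : ε ≤ |p.2 - y|) :
    ε ≤ cost2 p y :=
  le_min h₁ h₂

lemma min_abs_sub_le_add {ε : ℝ} (hε : 0 ≤ ε) (v y z : ℝ) :
    min ε |y - z| ≤ min ε |v - y| + min ε |v - z| := by
  have h := abs_sub_le y v z
  rw [abs_sub_comm y v] at h
  rcases min_cases ε |v - y| with ⟨hy, -⟩ | ⟨hy, -⟩ <;>
  rcases min_cases ε |v - z| with ⟨hz, -⟩ | ⟨hz, -⟩ <;>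
  linarith [min_le_left ε |y - z|, min_le_right ε |y - z|, abs_nonneg (v - y), abs_nonneg (v - z)]

lemma le_cost2_add_cost2 {ε y z : ℝ} {p : ℝ × ℝ} (hε : 0 ≤ ε) (hyz : ε ≤ |y - z|)
    (hy : ε ≤ |p.1 - y|) (hz : ε ≤ |p.1 - z|) : ε ≤ cost2 p y + cost2 p z :=
  calc ε = min ε |y - z| := (min_eq_left hyz).symm
    _ ≤ min ε |p.2 - y| + min ε |p.2 - z| := min_abs_sub_le_add hε _ _ _
    _ ≤ cost2 p y + cost2 p z :=
      add_le_add (min_le_min_right _ hy) (min_le_min_right _ hz)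

lemma SC_hardProfile (k : ℕ) (ε : ℝ) (p : ℝ × ℝ) :
    SC p (hardProfile (k + 1 + (k + 1)) ε) =
      cost2 p 0 + cost2 p 1 + k * (cost2 p ε + cost2 p (1 - ε)) := by
  let y : ℕ → ℝ := fun i =>
    if i = 0 then 0 else if i = k + 1 + (k + 1) - 1 then 1
    else if i < (k + 1 + (k + 1)) / 2 then ε else 1 - ε
  have hleft : ∀ i ∈ Finset.range k, y (i + 1) = ε := fun i hi => by
    have := Finset.mem_range.1 hi
    simp only [y]; rw [if_neg (by omega), if_neg (by omega), if_pos (by omega)]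
  have hright : ∀ i ∈ Finset.range k, y (k + 1 + i) = 1 - ε := fun i hi => by
    have := Finset.mem_range.1 hi
    simp only [y]; rw [if_neg (by omega), if_neg (by omega), if_neg (by omega)]
  have h0 : y 0 = 0 := if_pos rfl
  have h1 : y (k + 1 + k) = 1 := by
    simp only [y]; rw [if_neg (by omega), if_pos (by omega)]
  calc SC p (hardProfile (k + 1 + (k + 1)) ε)
      = ∑ i ∈ Finset.range (k + 1 + (k + 1)), cost2 p (y i) :=
        Fin.sum_univ_eq_sum_range (fun i => cost2 p (y i)) _
    _ = _ := by
      rw [Finset.sum_range_add, Finset.sum_range_succ', Finset.sum_range_succ,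
        Finset.sum_congr rfl fun i hi => congrArg (cost2 p) (hleft i hi),
        Finset.sum_congr rfl fun i hi => congrArg (cost2 p) (hright i hi), h0, h1]
      simp only [Finset.sum_const, Finset.card_range, nsmul_eq_mul]
      ring

lemma succ_mul_le_SC_hardProfile {k : ℕ} {ε : ℝ} {p : ℝ × ℝ} (hk : 1 ≤ k)
    (hpair : ε ≤ cost2 p ε + cost2 p (1 - ε))
    (hend : 2 * ε ≤ cost2 p ε + cost2 p (1 - ε) + (cost2 p 0 + cost2 p 1)) :
    (k + 1) * ε ≤ SC p (hardProfile (k + 1 + (k + 1)) ε) := by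
  have hk' : (0 : ℝ) ≤ k - 1 := by rw [sub_nonneg]; exact_mod_cast hk
  rw [SC_hardProfile]
  nlinarith [mul_le_mul_of_nonneg_left hpair hk']

section

variable {ε : ℝ} (hε : 0 ≤ ε) (hε' : ε ≤ 1 / 4)
include hε hε'

lemma two_mul_le_cost2_add (p : ℝ × ℝ) :
    2 * ε ≤ cost2 p 0 + cost2 p ε + cost2 p (1 - ε) + cost2 p 1 := by
  wlog hp : p.1 ≤ p.2 generalizing p
  · have := this p.swap (le_of_not_ge hp)
    simpa only [cost2_swap] using this
  have := cost2_nonneg p 0; have := cost2_nonneg p ε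
  have := cost2_nonneg p (1 - ε); have := cost2_nonneg p 1
  rcases le_or_gt p.2 (1 / 2) with h₂ | h₂
  · have h1ε : ε ≤ cost2 p (1 - ε) :=
      le_cost2 (le_abs_sub_of_add_le (by linarith)) (le_abs_sub_of_add_le (by linarith))
    have h1 : ε ≤ cost2 p 1 :=
      le_cost2 (le_abs_sub_of_add_le (by linarith)) (le_abs_sub_of_add_le (by linarith))
    linarith
  rcases le_or_gt p.1 (1 / 2) with h₁ | h₁
  · have hR : ε ≤ cost2 p (1 - ε) + cost2 p 1 :=
      le_cost2_add_cost2 hε (le_abs_sub_of_add_le (by linarith))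
        (le_abs_sub_of_add_le (by linarith)) (le_abs_sub_of_add_le (by linarith))
    have hL : ε ≤ cost2 p 0 + cost2 p ε := by
      simpa only [cost2_swap] using le_cost2_add_cost2 (p := p.swap) hε (le_abs_sub_of_add_le (by linarith))
        (le_abs_sub_of_add_le' (u := p.2) (by linarith)) (le_abs_sub_of_add_le' (u := p.2) (by linarith))
    linarith
  · have h0 : ε ≤ cost2 p 0 :=
      le_cost2 (le_abs_sub_of_add_le' (by linarith)) (le_abs_sub_of_add_le' (by linarith))
    have hε0 : ε ≤ cost2 p ε :=
      le_cost2 (le_abs_sub_of_add_le' (by linarith)) (le_abs_sub_of_add_le' (by linarith))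
    linarith

lemma OPT_hardProfile {k : ℕ} (hk : 1 ≤ k) : OPT (hardProfile (k + 1 + (k + 1)) ε) = 2 * ε := by
  refine IsLeast.csInf_eq ⟨⟨ε, 1 - ε, ?_⟩, ?_⟩
  · rw [SC_hardProfile]
    have h1ε : |1 - ε| = 1 - ε := abs_of_nonneg (by linarith)
    have hε1 : |ε - 1| = 1 - ε := by rw [abs_sub_comm, h1ε]
    have hmin : ε ≤ 1 - ε := by linarith
    simp [cost2, abs_of_nonneg hε, h1ε, hε1, min_eq_left hmin, min_eq_right hmin]
    ring
  · rintro _ ⟨l₁, l₂, rfl⟩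
    have hk' : (1 : ℝ) ≤ k := by exact_mod_cast hk
    have := two_mul_le_cost2_add hε hε' (l₁, l₂)
    have := cost2_nonneg (l₁, l₂) ε; have := cost2_nonneg (l₁, l₂) (1 - ε)
    rw [SC_hardProfile]
    nlinarith

variable {k : ℕ} (hk : 1 ≤ k) {p : ℝ × ℝ}
include hk

lemma succ_mul_le_SC_hardProfile_of_fst_eq_snd (hp : p.1 = p.2) :
    (k + 1) * ε ≤ SC p (hardProfile (k + 1 + (k + 1)) ε) := by
  have hsum : 2 * ε ≤ cost2 p ε + cost2 p (1 - ε) := by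
    rw [cost2_of_fst_eq_snd hp, cost2_of_fst_eq_snd hp, abs_sub_comm]
    exact (le_abs_sub_of_add_le (by linarith)).trans (abs_sub_le ε p.1 (1 - ε))
  have := cost2_nonneg p 0; have := cost2_nonneg p 1
  exact succ_mul_le_SC_hardProfile hk (by linarith) (by linarith)

lemma succ_mul_le_SC_hardProfile_of_fst_nonpos (hu : p.1 ≤ 0) :
    (k + 1) * ε ≤ SC p (hardProfile (k + 1 + (k + 1)) ε) := by
  have hpair : ε ≤ cost2 p ε + cost2 p (1 - ε) :=
    le_cost2_add_cost2 hε (le_abs_sub_of_add_le (by linarith))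
      (le_abs_sub_of_add_le (by linarith)) (le_abs_sub_of_add_le (by linarith))
  have := cost2_nonneg p 0; have := cost2_nonneg p ε
  refine succ_mul_le_SC_hardProfile hk hpair ?_
  rcases le_or_gt p.2 (1 / 2) with hv | hv
  · have h1ε : ε ≤ cost2 p (1 - ε) :=
      le_cost2 (le_abs_sub_of_add_le (by linarith)) (le_abs_sub_of_add_le (by linarith))
    have h1 : ε ≤ cost2 p 1 :=
      le_cost2 (le_abs_sub_of_add_le (by linarith)) (le_abs_sub_of_add_le (by linarith))
    linarith
  · have hε1 : ε ≤ cost2 p ε :=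
      le_cost2 (le_abs_sub_of_add_le (by linarith)) (le_abs_sub_of_add_le' (by linarith))
    have hR : ε ≤ cost2 p (1 - ε) + cost2 p 1 :=
      le_cost2_add_cost2 hε (le_abs_sub_of_add_le (by linarith))
        (le_abs_sub_of_add_le (by linarith)) (le_abs_sub_of_add_le (by linarith))
    linarith

lemma succ_mul_le_SC_hardProfile_of_one_le_fst (hu : 1 ≤ p.1) :
    (k + 1) * ε ≤ SC p (hardProfile (k + 1 + (k + 1)) ε) := by
  have hpair : ε ≤ cost2 p ε + cost2 p (1 - ε) :=
    le_cost2_add_cost2 hε (le_abs_sub_of_add_le (by linarith))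
      (le_abs_sub_of_add_le' (by linarith)) (le_abs_sub_of_add_le' (by linarith))
  have := cost2_nonneg p 1; have := cost2_nonneg p (1 - ε)
  refine succ_mul_le_SC_hardProfile hk hpair ?_
  rcases le_or_gt p.2 (1 / 2) with hv | hv
  · have h1ε : ε ≤ cost2 p (1 - ε) :=
      le_cost2 (le_abs_sub_of_add_le' (by linarith)) (le_abs_sub_of_add_le (by linarith))
    have hL : ε ≤ cost2 p 0 + cost2 p ε :=
      le_cost2_add_cost2 hε (le_abs_sub_of_add_le (by linarith))
        (le_abs_sub_of_add_le' (by linarith)) (le_abs_sub_of_add_le' (by linarith))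
    linarith
  · have hε1 : ε ≤ cost2 p ε :=
      le_cost2 (le_abs_sub_of_add_le' (by linarith)) (le_abs_sub_of_add_le' (by linarith))
    have h0 : ε ≤ cost2 p 0 :=
      le_cost2 (le_abs_sub_of_add_le' (by linarith)) (le_abs_sub_of_add_le' (by linarith))
    linarith

lemma succ_mul_le_SC_hardProfile_of_output
    (hp : p.1 = p.2 ∨ ∃ l, (l = p.1 ∨ l = p.2) ∧
      ((∀ j, l ≤ hardProfile (k + 1 + (k + 1)) ε j) ∨ (∀ j, hardProfile (k + 1 + (k + 1)) ε j ≤ l))) :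
    (k + 1) * ε ≤ SC p (hardProfile (k + 1 + (k + 1)) ε) := by
  rcases hp with hp | ⟨l, hl, hout⟩
  · exact succ_mul_le_SC_hardProfile_of_fst_eq_snd hε hε' hk hp
  have hl' : l ≤ 0 ∨ 1 ≤ l := by
    refine hout.imp (fun h => ?_) (fun h => ?_)
    · simpa [hardProfile] using h ⟨0, by omega⟩
    · simpa [hardProfile] using h ⟨k + 1 + k, by omega⟩
  have hfst : ∀ q : ℝ × ℝ, q.1 = l → (k + 1) * ε ≤ SC q (hardProfile (k + 1 + (k + 1)) ε) := by
    rintro q rfl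
    exact hl'.elim (succ_mul_le_SC_hardProfile_of_fst_nonpos hε hε' hk)
      (succ_mul_le_SC_hardProfile_of_one_le_fst hε hε' hk)
  rcases hl with rfl | rfl
  · exact hfst p rfl
  · rw [← SC_swap]; exact hfst p.swap rfl

end

/-- Any deterministic mechanism whose output on every profile either has coinciding
facilities or has some facility at or outside the extremes, has approximation ratio
at least `n/4`; concretely, on the hard profile its social cost is at least
`(n/2 - 1)·ε` while `OPT = 2ε`. -/
theorem stmt4 (n : ℕ) (hn : 6 ≤ n) (hne : Even n)
    (f : (Fin n → ℝ) → ℝ × ℝ)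
    (hprop : ∀ x : Fin n → ℝ,
      (f x).1 = (f x).2 ∨
      (∃ l, (l = (f x).1 ∨ l = (f x).2) ∧ ((∀ j, l ≤ x j) ∨ (∀ j, x j ≤ l)))) :
    (∀ ε : ℝ, 0 < ε → ε < 1 / 4 →
      ((n : ℝ) / 2 - 1) * ε ≤ SC (f (hardProfile n ε)) (hardProfile n ε) ∧
      OPT (hardProfile n ε) = 2 * ε) ∧
    (∀ γ : ℝ, (∀ x : Fin n → ℝ, SC (f x) x ≤ γ * OPT x) → (n : ℝ) / 4 ≤ γ) := by
  obtain ⟨m, rfl⟩ := hne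
  obtain ⟨k, rfl⟩ : ∃ k, m = k + 1 := ⟨m - 1, by omega⟩
  have hk : 1 ≤ k := by omega
  have hcast : ((k + 1 + (k + 1) : ℕ) : ℝ) = 2 * (k + 1) := by push_cast; ring
  have hmech : ∀ ε : ℝ, 0 ≤ ε → ε ≤ 1 / 4 →
      (k + 1) * ε ≤ SC (f (hardProfile _ ε)) (hardProfile (k + 1 + (k + 1)) ε) :=
    fun ε hε hε' => succ_mul_le_SC_hardProfile_of_output hε hε' hk (hprop _)
  refine ⟨fun ε hε hε' => ⟨?_, OPT_hardProfile hε.le hε'.le hk⟩, fun γ hγ => ?_⟩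
  · rw [hcast]
    linarith [hmech ε hε.le hε'.le]
  · have h := (hmech (1 / 8) (by norm_num) (by norm_num)).trans (hγ _)
    rw [OPT_hardProfile (by norm_num) (by norm_num) hk] at h
    rw [hcast]
    linarith
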